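/- Let τ be a finite unordered rooted tree and H ≥ 1. If, for every height 0 ≤ h < H, all the subtrees of height h appearing in τ are pairwise isomorphic, and if all the subtrees of height H appearing in τ have, for each 0 ≤ h < H, the same number of subtrees of height h rooted at a child of their root, then all the subtrees of height H appearing in τ are pairwise isomorphic. -/

import Mathlib

/-- A finite rooted tree whose vertices form a finite subset `supp` of `ℕ`.
`par` maps each vertex to its parent; the root is a fixed point of `par`
(so it has no parent), and every vertex reaches the root by iterating `par`
(connectedness / acyclicity). -/
structure FTree where
  supp : Finset ℕ
  root : ℕ
  root_mem : root ∈ supp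
  par : ℕ → ℕ
  par_mem : ∀ v ∈ supp, par v ∈ supp
  par_root : par root = root
  reach : ∀ v ∈ supp, ∃ n, par^[n] v = root

namespace FTree

/-- Depth of a vertex: least number of parent steps needed to reach the root. -/
noncomputable def depth (t : FTree) (v : ℕ) : ℕ :=
  if h : v ∈ t.supp then Nat.find (t.reach v h) else 0

/-- `w` is a (weak) descendant of `v` in `t`. -/
def IsDesc (t : FTree) (v w : ℕ) : Prop :=
  w ∈ t.supp ∧ ∃ n ≤ t.depth w, t.par^[n] w = v

open Classical in
/-- Vertex set of the subtree `t[v]` rooted at `v`. -/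
noncomputable def desc (t : FTree) (v : ℕ) : Finset ℕ :=
  t.supp.filter (fun w => t.IsDesc v w)

/-- Height of the subtree `t[v]` rooted at `v`. -/
noncomputable def heightAt (t : FTree) (v : ℕ) : ℕ :=
  (t.desc v).sup (fun w => t.depth w) - t.depth v

/-- Height of the tree. -/
noncomputable def height (t : FTree) : ℕ := t.heightAt t.root

/-- The set of children of `v` in `t`. -/
def children (t : FTree) (v : ℕ) : Finset ℕ :=
  t.supp.filter (fun w => t.par w = v ∧ w ≠ t.root)

open Classical in
/-- `γ_h(v)`: number of children of `v` whose subtree has height `h`. -/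
noncomputable def gam (t : FTree) (v h : ℕ) : ℕ :=
  ((t.children v).filter (fun c => t.heightAt c = h)).card

/-- The subtree of `t` rooted at `v` is isomorphic (as an unordered rooted tree)
to the subtree of `s` rooted at `w`: a bijection between the vertex sets sending
root to root and commuting with the parent maps (i.e. mapping edges to edges). -/
def SubtreeIso (t : FTree) (v : ℕ) (s : FTree) (w : ℕ) : Prop :=
  ∃ φ : ℕ → ℕ, Set.BijOn φ (t.desc v : Set ℕ) (s.desc w : Set ℕ) ∧ φ v = w ∧
    ∀ x ∈ t.desc v, x ≠ v → φ (t.par x) = s.par (φ x)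

/-- Isomorphism of rooted trees. -/
def TreeIso (t s : FTree) : Prop := SubtreeIso t t.root s s.root

/-- A tree is self-nested if any two of its subtrees of the same height
are isomorphic. -/
def SelfNested (t : FTree) : Prop :=
  ∀ v ∈ t.supp, ∀ w ∈ t.supp, t.heightAt v = t.heightAt w → SubtreeIso t v t w

open Classical in
/-- Height profile entry `ρ_t(h1,h2)`: the multiset (family up to permutation) of
the values `γ_{h2}(v)` over all vertices `v` of `t` with `H(t[v]) = h1`. -/
noncomputable def profile (t : FTree) (h1 h2 : ℕ) : Multiset ℕ :=
  (t.supp.filter (fun v => t.heightAt v = h1)).val.map (fun v => t.gam v h2)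

/-- Number of vertices of `t`. -/
def numV (t : FTree) : ℕ := t.supp.card

/-- `a` is a (weak) ancestor of `b`. -/
def IsAnc (t : FTree) (a b : ℕ) : Prop := ∃ n, t.par^[n] b = a

/-- `a` is a proper ancestor of `b`. -/
def ProperAnc (t : FTree) (a b : ℕ) : Prop := a ≠ b ∧ t.IsAnc a b

/-- `l` is the least common ancestor of `a` and `b`. -/
def IsLCA (t : FTree) (a b l : ℕ) : Prop :=
  l ∈ t.supp ∧ t.IsAnc l a ∧ t.IsAnc l b ∧
    ∀ m ∈ t.supp, t.IsAnc m a → t.IsAnc m b → t.IsAnc m l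

/-- `φ`, restricted to the domain `D ⊆ t.supp`, is a constrained mapping in the
sense of Zhang from `t` to `s`: a one-to-one correspondence preserving the
ancestor order, satisfying moreover Zhang's condition on least common ancestors. -/
def ZhangMapping (t s : FTree) (D : Finset ℕ) (φ : ℕ → ℕ) : Prop :=
  D ⊆ t.supp ∧ (∀ x ∈ D, φ x ∈ s.supp) ∧ Set.InjOn φ (D : Set ℕ) ∧
  (∀ a ∈ D, ∀ b ∈ D, (t.ProperAnc a b ↔ s.ProperAnc (φ a) (φ b))) ∧
  (∀ v1 ∈ D, ∀ v2 ∈ D, ∀ v3 ∈ D, ∀ l l',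
    t.IsLCA v1 v2 l → s.IsLCA (φ v1) (φ v2) l' →
    (t.ProperAnc l v3 ↔ s.ProperAnc l' (φ v3)))

/-- Allowed inserting operation (AI): adding a new internal vertex `w` as a child of
`v`, making `w` the parent of the child `c` of `v`; allowed only if
`H(t[c]) + 1 < H(t[v])`. -/
def InsertAI (t θ : FTree) : Prop :=
  ∃ v c w, v ∈ t.supp ∧ c ∈ t.children v ∧ w ∉ t.supp ∧
    t.heightAt c + 1 < t.heightAt v ∧
    θ.supp = insert w t.supp ∧ θ.root = t.root ∧
    θ.par w = v ∧ θ.par c = w ∧ ∀ x ∈ t.supp, x ≠ c → θ.par x = t.par x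

/-- Allowed inserting operation (AS): attaching a tree `s` as a new child subtree of
`v`; allowed only if `H(s) + 1 ≤ H(t[v])`. -/
def InsertAS (t θ : FTree) : Prop :=
  ∃ (v : ℕ) (s : FTree), v ∈ t.supp ∧ Disjoint s.supp t.supp ∧
    s.height + 1 ≤ t.heightAt v ∧
    θ.supp = t.supp ∪ s.supp ∧ θ.root = t.root ∧ θ.par s.root = v ∧
    (∀ x ∈ t.supp, θ.par x = t.par x) ∧ (∀ x ∈ s.supp, x ≠ s.root → θ.par x = s.par x)

/-- One allowed inserting operation. -/
def InsertStep (t θ : FTree) : Prop := InsertAI t θ ∨ InsertAS t θ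

/-- Allowed deleting operation (DI): deleting an internal vertex `v`, child of `u`,
having a unique child `c` (which becomes a child of `u`); allowed only if `u` has
another child `v'` with `H(t[v']) ≥ H(t[v])`. -/
def DeleteDI (t θ : FTree) : Prop :=
  ∃ u v c, v ∈ t.children u ∧ t.children v = {c} ∧
    (∃ v' ∈ t.children u, v' ≠ v ∧ t.heightAt v ≤ t.heightAt v') ∧
    θ.supp = t.supp.erase v ∧ θ.root = t.root ∧ θ.par c = u ∧
    ∀ x ∈ t.supp, x ≠ v → x ≠ c → θ.par x = t.par x

/-- Allowed deleting operation (DS): deleting the whole subtree rooted at a child `w`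
of `v`; allowed only if `v` has another child `w'` with `H(t[w']) + 1 = H(t[v])`. -/
def DeleteDS (t θ : FTree) : Prop :=
  ∃ v w, w ∈ t.children v ∧
    (∃ w' ∈ t.children v, w' ≠ w ∧ t.heightAt w' + 1 = t.heightAt v) ∧
    θ.supp = t.supp \ t.desc w ∧ θ.root = t.root ∧
    ∀ x ∈ θ.supp, θ.par x = t.par x

/-- One allowed deleting operation. -/
def DeleteStep (t θ : FTree) : Prop := DeleteDI t θ ∨ DeleteDS t θ

/-- A general single-vertex inserting operation: a new vertex `w` is added as a child
of `v`, and the vertices of a subset `C` of the children of `v` become children of `w`. -/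
def GeneralInsert (t θ : FTree) : Prop :=
  ∃ (v w : ℕ) (C : Finset ℕ), v ∈ t.supp ∧ w ∉ t.supp ∧ C ⊆ t.children v ∧
    θ.supp = insert w t.supp ∧ θ.root = t.root ∧ θ.par w = v ∧
    (∀ x ∈ C, θ.par x = w) ∧ ∀ x ∈ t.supp, x ∉ C → θ.par x = t.par x

/-- Cost of a constrained mapping with domain `D`: vertices of `t` not in the domain
are deleted, vertices of `s` not in the image are inserted (unit costs). -/
def mappingCost (t s : FTree) (D : Finset ℕ) (φ : ℕ → ℕ) : ℕ :=
  (t.numV - D.card) + (s.numV - (D.image φ).card)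

/-- Zhang's constrained edit distance between unordered trees: the minimal cost
associated with a constrained mapping between `t` and `s`. -/
noncomputable def DZ (t s : FTree) : ℕ :=
  sInf { c | ∃ (D : Finset ℕ) (φ : ℕ → ℕ), ZhangMapping t s D φ ∧ c = mappingCost t s D φ }

end FTree

/-!
Children of a vertex have strictly smaller height, so two vertices of height `H` with the
same counts `γ_h` for `h < H` have the same counts for every `h`, and their children can be
matched by a height-preserving bijection. Matched children root subtrees of a common height
`h < H`, which are isomorphic by hypothesis; gluing these isomorphisms along the matching and
sending root to root gives the required isomorphism.
-/

namespace FTree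

section Structure

variable (t : FTree) {v x c : ℕ}

lemma iterate_par_mem (hx : x ∈ t.supp) (n : ℕ) : t.par^[n] x ∈ t.supp := by
  induction n with
  | zero => exact hx
  | succ n ih => rw [Function.iterate_succ_apply']; exact t.par_mem _ ih

lemma iterate_depth_eq_root (hx : x ∈ t.supp) : t.par^[t.depth x] x = t.root := by
  rw [depth, dif_pos hx]; exact Nat.find_spec (t.reach x hx)

lemma iterate_ne_root_of_lt_depth (hx : x ∈ t.supp) {m : ℕ} (hm : m < t.depth x) :
    t.par^[m] x ≠ t.root := by
  rw [depth, dif_pos hx] at hm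
  exact Nat.find_min (t.reach x hx) hm

lemma depth_le_of_iterate_eq_root (hx : x ∈ t.supp) {m : ℕ} (h : t.par^[m] x = t.root) :
    t.depth x ≤ m := by
  rw [depth, dif_pos hx]; exact Nat.find_le h

lemma depth_iterate_par (hx : x ∈ t.supp) {n : ℕ} (hn : n ≤ t.depth x) :
    t.depth (t.par^[n] x) = t.depth x - n := by
  have hmem := t.iterate_par_mem hx n
  have hle : t.depth (t.par^[n] x) ≤ t.depth x - n := by
    refine t.depth_le_of_iterate_eq_root hmem ?_
    rw [← Function.iterate_add_apply, Nat.sub_add_cancel hn, t.iterate_depth_eq_root hx]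
  have hge : t.depth x ≤ t.depth (t.par^[n] x) + n := by
    refine t.depth_le_of_iterate_eq_root hx ?_
    rw [Function.iterate_add_apply, t.iterate_depth_eq_root hmem]
  omega

lemma mem_children : c ∈ t.children v ↔ c ∈ t.supp ∧ t.par c = v ∧ c ≠ t.root := by
  simp [children]

lemma depth_of_mem_children (hc : c ∈ t.children v) : t.depth c = t.depth v + 1 := by
  obtain ⟨hcs, rfl, hroot⟩ := t.mem_children.mp hc
  have hpos : 1 ≤ t.depth c := Nat.one_le_iff_ne_zero.mpr fun h0 =>
    hroot (by simpa [h0] using t.iterate_depth_eq_root hcs)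
  have := t.depth_iterate_par hcs hpos
  simp only [Function.iterate_one] at this
  omega

lemma mem_desc : x ∈ t.desc v ↔ x ∈ t.supp ∧ ∃ n ≤ t.depth x, t.par^[n] x = v := by
  classical
  rw [desc, Finset.mem_filter, IsDesc, and_self_left]

lemma mem_desc_of_iterate (hx : x ∈ t.supp) {n : ℕ} (hn : n ≤ t.depth x)
    (h : t.par^[n] x = v) : x ∈ t.desc v :=
  t.mem_desc.mpr ⟨hx, n, hn, h⟩

lemma mem_desc_self (hv : v ∈ t.supp) : v ∈ t.desc v :=
  t.mem_desc_of_iterate hv (Nat.zero_le _) rfl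

lemma depth_le_of_mem_desc (h : x ∈ t.desc v) : t.depth v ≤ t.depth x := by
  obtain ⟨hx, n, hn, rfl⟩ := t.mem_desc.mp h
  rw [t.depth_iterate_par hx hn]
  omega

lemma iterate_depth_sub_of_mem_desc (h : x ∈ t.desc v) :
    t.par^[t.depth x - t.depth v] x = v := by
  obtain ⟨hx, n, hn, rfl⟩ := t.mem_desc.mp h
  rw [t.depth_iterate_par hx hn, Nat.sub_sub_self hn]

lemma depth_lt_of_mem_desc (h : x ∈ t.desc v) (hne : x ≠ v) : t.depth v < t.depth x := by
  refine lt_of_le_of_ne (t.depth_le_of_mem_desc h) fun heq => hne ?_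
  simpa [heq] using t.iterate_depth_sub_of_mem_desc h

lemma not_mem_desc_of_mem_children (hc : c ∈ t.children v) : v ∉ t.desc c := fun h => by
  have := t.depth_le_of_mem_desc h
  have := t.depth_of_mem_children hc
  omega

lemma mem_desc_of_mem_desc_child (hc : c ∈ t.children v) (hx : x ∈ t.desc c) :
    x ∈ t.desc v := by
  have hdc := t.depth_of_mem_children hc
  have hcx := t.depth_le_of_mem_desc hx
  refine t.mem_desc_of_iterate (t.mem_desc.mp hx).1 (n := t.depth x - t.depth c + 1)
    (by omega) ?_
  rw [Function.iterate_succ_apply', t.iterate_depth_sub_of_mem_desc hx]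
  exact (t.mem_children.mp hc).2.1

lemma par_mem_desc (hx : x ∈ t.desc v) (hne : x ≠ v) : t.par x ∈ t.desc v := by
  have hxs := (t.mem_desc.mp hx).1
  have hlt := t.depth_lt_of_mem_desc hx hne
  have hdp : t.depth (t.par x) = t.depth x - 1 := by
    simpa using t.depth_iterate_par hxs (n := 1) (by omega)
  refine t.mem_desc_of_iterate (t.par_mem _ hxs) (n := t.depth x - t.depth v - 1) (by omega) ?_
  rw [← Function.iterate_succ_apply t.par, Nat.succ_eq_add_one,
    show t.depth x - t.depth v - 1 + 1 = t.depth x - t.depth v by omega,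
    t.iterate_depth_sub_of_mem_desc hx]

noncomputable def childToward (t : FTree) (v x : ℕ) : ℕ := t.par^[t.depth x - t.depth v - 1] x

lemma childToward_mem_children (hx : x ∈ t.desc v) (hne : x ≠ v) :
    t.childToward v x ∈ t.children v := by
  have hxs := (t.mem_desc.mp hx).1
  have hlt := t.depth_lt_of_mem_desc hx hne
  refine t.mem_children.mpr ⟨t.iterate_par_mem hxs _, ?_, t.iterate_ne_root_of_lt_depth hxs ?_⟩
  · rw [childToward, ← Function.iterate_succ_apply' t.par, Nat.succ_eq_add_one,
      show t.depth x - t.depth v - 1 + 1 = t.depth x - t.depth v by omega,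
      t.iterate_depth_sub_of_mem_desc hx]
  · omega

lemma mem_desc_childToward (hx : x ∈ t.desc v) : x ∈ t.desc (t.childToward v x) :=
  t.mem_desc_of_iterate (t.mem_desc.mp hx).1 (by omega) rfl

lemma childToward_eq (hc : c ∈ t.children v) (hx : x ∈ t.desc c) : t.childToward v x = c := by
  have hdc := t.depth_of_mem_children hc
  rw [childToward, show t.depth x - t.depth v - 1 = t.depth x - t.depth c by omega,
    t.iterate_depth_sub_of_mem_desc hx]

lemma eq_or_exists_mem_desc_child (hx : x ∈ t.desc v) :
    x = v ∨ ∃ c : t.children v, x ∈ t.desc c :=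
  or_iff_not_imp_left.mpr fun hne =>
    ⟨⟨_, t.childToward_mem_children hx hne⟩, t.mem_desc_childToward hx⟩

lemma sup_depth_desc (hv : v ∈ t.supp) :
    (t.desc v).sup t.depth = t.depth v + t.heightAt v := by
  have : t.depth v ≤ (t.desc v).sup t.depth := Finset.le_sup (t.mem_desc_self hv)
  change _ = _ + ((t.desc v).sup t.depth - t.depth v)
  omega

lemma heightAt_lt_of_mem_children (hc : c ∈ t.children v) : t.heightAt c < t.heightAt v := by
  obtain ⟨hcs, rfl, -⟩ := t.mem_children.mp hc
  have hsub : (t.desc c).sup t.depth ≤ (t.desc (t.par c)).sup t.depth :=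
    Finset.sup_mono fun x => t.mem_desc_of_mem_desc_child hc
  rw [t.sup_depth_desc hcs, t.sup_depth_desc (t.par_mem _ hcs),
    t.depth_of_mem_children hc] at hsub
  omega

lemma card_children_heightAt_eq (k : ℕ) :
    Fintype.card {c : t.children v // t.heightAt c = k} = t.gam v k := by
  classical
  rw [gam, Fintype.card_subtype, ← Finset.card_map (Function.Embedding.subtype _)]
  congr 1
  ext c
  simp [and_comm]

lemma gam_eq_zero_of_heightAt_le {k : ℕ} (hk : t.heightAt v ≤ k) : t.gam v k = 0 :=
  Finset.card_eq_zero.mpr <| Finset.filter_false_of_mem fun c hc hck => by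
    have := t.heightAt_lt_of_mem_children hc
    omega

end Structure

def IsSubtreeIso (φ : ℕ → ℕ) (t : FTree) (v : ℕ) (s : FTree) (w : ℕ) : Prop :=
  Set.BijOn φ (t.desc v : Set ℕ) (s.desc w : Set ℕ) ∧ φ v = w ∧
    ∀ x ∈ t.desc v, x ≠ v → φ (t.par x) = s.par (φ x)

section Glue

variable {t s : FTree} {v w x c : ℕ} {Φ : ℕ → ℕ → ℕ}

noncomputable def glue (t : FTree) (v w : ℕ) (Φ : ℕ → ℕ → ℕ) (x : ℕ) : ℕ :=
  if x = v then w else Φ (t.childToward v x) x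

lemma glue_self : glue t v w Φ v = w := if_pos rfl

lemma glue_of_mem_desc_child (hc : c ∈ t.children v) (hx : x ∈ t.desc c) :
    glue t v w Φ x = Φ c x := by
  have hne : x ≠ v := fun h => t.not_mem_desc_of_mem_children hc (h ▸ hx)
  rw [glue, if_neg hne, t.childToward_eq hc hx]

theorem isSubtreeIso_glue (hv : v ∈ t.supp) (hw : w ∈ s.supp)
    (e : t.children v ≃ s.children w) (hΦ : ∀ c : t.children v, IsSubtreeIso (Φ c) t c s (e c)) :
    IsSubtreeIso (glue t v w Φ) t v s w := by
  have hmem : ∀ c : t.children v, ∀ x ∈ t.desc c, glue t v w Φ x ∈ s.desc (e c) :=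
    fun c x hx => by rw [glue_of_mem_desc_child c.2 hx]; exact (hΦ c).1.mapsTo hx
  have hne : ∀ c : t.children v, ∀ x ∈ t.desc c, glue t v w Φ x ≠ w :=
    fun c x hx h => s.not_mem_desc_of_mem_children (e c).2 (by simpa only [h] using hmem c x hx)
  refine ⟨⟨?maps, ?inj, ?surj⟩, glue_self, ?par⟩
  case maps =>
    intro x hx
    obtain rfl | ⟨c, hxc⟩ := t.eq_or_exists_mem_desc_child hx
    · rw [glue_self]; exact s.mem_desc_self hw
    · exact s.mem_desc_of_mem_desc_child (e c).2 (hmem c x hxc)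
  case inj =>
    intro x hx y hy hxy
    obtain rfl | ⟨cx, hxc⟩ := t.eq_or_exists_mem_desc_child hx <;>
      obtain rfl | ⟨cy, hyc⟩ := t.eq_or_exists_mem_desc_child hy
    · rfl
    · exact absurd (hxy.symm.trans glue_self) (hne cy y hyc)
    · exact absurd (hxy.trans glue_self) (hne cx x hxc)
    · have hcx := s.childToward_eq (e cx).2 (hmem cx x hxc)
      rw [hxy, s.childToward_eq (e cy).2 (hmem cy y hyc)] at hcx
      obtain rfl : cx = cy := e.injective (Subtype.ext hcx.symm)
      rw [glue_of_mem_desc_child cx.2 hxc, glue_of_mem_desc_child cx.2 hyc] at hxy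
      exact (hΦ cx).1.injOn hxc hyc hxy
  case surj =>
    intro y hy
    obtain rfl | ⟨d, hyd⟩ := s.eq_or_exists_mem_desc_child hy
    · exact ⟨v, t.mem_desc_self hv, glue_self⟩
    · obtain ⟨x, hx, rfl⟩ := (hΦ (e.symm d)).1.surjOn (by rwa [e.apply_symm_apply])
      exact ⟨x, t.mem_desc_of_mem_desc_child (e.symm d).2 hx,
        glue_of_mem_desc_child (e.symm d).2 hx⟩
  case par =>
    intro x hx hxv
    obtain rfl | ⟨c, hxc⟩ := t.eq_or_exists_mem_desc_child hx
    · exact absurd rfl hxv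
    by_cases hxc' : x = c
    · subst hxc'
      rw [(t.mem_children.mp c.2).2.1, glue_self, glue_of_mem_desc_child c.2 hxc, (hΦ c).2.1,
        (s.mem_children.mp (e c).2).2.1]
    · rw [glue_of_mem_desc_child c.2 (t.par_mem_desc hxc hxc'), glue_of_mem_desc_child c.2 hxc]
      exact (hΦ c).2.2 x hxc hxc'

theorem subtreeIso_of_equiv_children (hv : v ∈ t.supp) (hw : w ∈ s.supp)
    (e : t.children v ≃ s.children w) (h : ∀ c : t.children v, SubtreeIso t c s (e c)) :
    SubtreeIso t v s w := by
  choose Φ hΦ using h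
  refine ⟨glue t v w fun c => if hc : c ∈ t.children v then Φ ⟨c, hc⟩ else id,
    isSubtreeIso_glue hv hw e fun c => ?_⟩
  rw [dif_pos c.2]
  exact hΦ c

end Glue

lemma exists_equiv_children_heightAt {t s : FTree} {v w : ℕ}
    (h : ∀ k, t.gam v k = s.gam w k) :
    ∃ e : t.children v ≃ s.children w, ∀ c, s.heightAt (e c) = t.heightAt c := by
  have hfib : ∀ k,
      {c : t.children v // t.heightAt c = k} ≃ {d : s.children w // s.heightAt d = k} :=
    fun k => Fintype.equivOfCardEq <| by
      rw [t.card_children_heightAt_eq, s.card_children_heightAt_eq, h k]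
  exact ⟨Equiv.ofFiberEquiv hfib, Equiv.ofFiberEquiv_map hfib⟩

end FTree

theorem subtrees_iso_at_height_general (t : FTree) (H : ℕ)
    (hlow : ∀ h < H, ∀ v ∈ t.supp, ∀ w ∈ t.supp,
      t.heightAt v = h → t.heightAt w = h → FTree.SubtreeIso t v t w)
    (hgam : ∀ h < H, ∀ v ∈ t.supp, ∀ w ∈ t.supp,
      t.heightAt v = H → t.heightAt w = H → t.gam v h = t.gam w h) :
    ∀ v ∈ t.supp, ∀ w ∈ t.supp, t.heightAt v = H → t.heightAt w = H →
      FTree.SubtreeIso t v t w := by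
  intro v hv w hw hHv hHw
  have hgam_all : ∀ k, t.gam v k = t.gam w k := fun k => by
    rcases lt_or_ge k H with hk | hk
    · exact hgam k hk v hv w hw hHv hHw
    · rw [t.gam_eq_zero_of_heightAt_le (hHv ▸ hk), t.gam_eq_zero_of_heightAt_le (hHw ▸ hk)]
  obtain ⟨e, he⟩ := FTree.exists_equiv_children_heightAt hgam_all
  refine FTree.subtreeIso_of_equiv_children hv hw e fun c => ?_
  exact hlow _ (hHv ▸ t.heightAt_lt_of_mem_children c.2) c (t.mem_children.mp c.2).1
    (e c) (t.mem_children.mp (e c).2).1 rfl (he c)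

/-- If, for every height `h < H`, all the subtrees of height `h`
appearing in `t` are pairwise isomorphic, and if all the subtrees of height `H` have,
for each `h < H`, the same number `γ_h` of subtrees of height `h` rooted at a child of
their root, then all the subtrees of height `H` appearing in `t` are pairwise
isomorphic. -/
theorem subtrees_iso_at_height (t : FTree) (H : ℕ) (hH : 1 ≤ H)
    (hlow : ∀ h < H, ∀ v ∈ t.supp, ∀ w ∈ t.supp,
      t.heightAt v = h → t.heightAt w = h → FTree.SubtreeIso t v t w)
    (hgam : ∀ h < H, ∀ v ∈ t.supp, ∀ w ∈ t.supp,
      t.heightAt v = H → t.heightAt w = H → t.gam v h = t.gam w h) :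
    ∀ v ∈ t.supp, ∀ w ∈ t.supp, t.heightAt v = H → t.heightAt w = H →
      FTree.SubtreeIso t v t w :=
  subtrees_iso_at_height_general t H hlow hgam
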